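/- arXiv:2009.02477 — 5 statements merged into one kernel-verified Lean document; each statement's English description precedes it below -/
import Mathlib

section
/- An element a of a complex unital Banach algebra A has a generalized Drazin inverse if and only if there exists x ∈ A with ax = xa and a − a²x quasinilpotent. -/
open Filter Finset

/-- An element of a complex (Banach) algebra is quasinilpotent if its spectral radius is zero. -/
noncomputable def Quasinilpotent {A : Type*} [Ring A] [Algebra ℂ A] (q : A) : Prop :=
  spectralRadius ℂ q = 0

/-- `a` has a generalized Drazin inverse: some `b` with `ab = ba`, `b = bab`,
and `a - a²b` quasinilpotent. -/
noncomputable def HasGDrazin {A : Type*} [Ring A] [Algebra ℂ A] (a : A) : Prop :=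
  ∃ b : A, a * b = b * a ∧ b = b * a * b ∧ Quasinilpotent (a - a ^ 2 * b)

/-!
Only the converse needs work, and it can be carried out in the bicommutant of `{a, x}`, a closed
commutative subalgebra. There `e = a x` satisfies `e - e² = (a - a² x) x`, which is quasinilpotent.
The binomial series `t = ∑ C(2n, n) (e - e²)ⁿ` of `(1 - 4 (e - e²))^(-1/2)` therefore converges,
and `p = (1 + (2e - 1) t) / 2` is an idempotent with `p - e` quasinilpotent. Then
`b = x p (1 - (p - e))⁻¹` satisfies `a b = p`, and `a - a² b = a (1 - p)` is quasinilpotent since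
`a (1 - p) (1 + p - e) = (1 - p) (a - a² x)`.
-/

open Topology

section BanachAlgebra

variable {A : Type*} [NormedRing A] [NormedAlgebra ℂ A] [CompleteSpace A] {y : A}

theorem quasinilpotent_iff_tendsto_norm_pow_rpow :
    Quasinilpotent y ↔ Tendsto (fun n : ℕ => ‖y ^ n‖ ^ (1 / n : ℝ)) atTop (𝓝 0) := by
  have gelfand := spectrum.pow_norm_pow_one_div_tendsto_nhds_spectralRadius y
  refine ⟨fun h => ?_, fun h => tendsto_nhds_unique gelfand ?_⟩
  · rw [show spectralRadius ℂ y = 0 from h] at gelfand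
    simpa [Function.comp_def, ENNReal.toReal_ofReal, Real.rpow_nonneg]
      using (ENNReal.tendsto_toReal ENNReal.zero_ne_top).comp gelfand
  · simpa using ENNReal.tendsto_ofReal h

theorem quasinilpotent_map_iff {B : Type*} [NormedRing B] [NormedAlgebra ℂ B]
    [CompleteSpace B] (f : B →ₐ[ℂ] A) (hf : ∀ z, ‖f z‖ = ‖z‖) {z : B} :
    Quasinilpotent (f z) ↔ Quasinilpotent z := by
  simp only [quasinilpotent_iff_tendsto_norm_pow_rpow, ← map_pow, hf]

namespace Quasinilpotent

theorem eventually_norm_pow_le (h : Quasinilpotent y) {ε : ℝ} (hε : 0 < ε) :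
    ∀ᶠ n in atTop, ‖y ^ n‖ ≤ ε ^ n := by
  filter_upwards [(quasinilpotent_iff_tendsto_norm_pow_rpow.mp h).eventually (ge_mem_nhds hε),
    eventually_ne_atTop 0] with n hroot hn
  calc ‖y ^ n‖ = (‖y ^ n‖ ^ (1 / n : ℝ)) ^ n := by
        rw [one_div, Real.rpow_inv_natCast_pow (norm_nonneg _) hn]
    _ ≤ ε ^ n := by gcongr

theorem mul_of_commute (h : Quasinilpotent y) {k : A} (hyk : Commute y k) :
    Quasinilpotent (y * k) := by
  rw [quasinilpotent_iff_tendsto_norm_pow_rpow] at h ⊢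
  refine squeeze_zero' (Eventually.of_forall fun n => by positivity) ?_
    (by simpa using h.mul_const ‖k‖ :
      Tendsto (fun n : ℕ => ‖y ^ n‖ ^ (1 / n : ℝ) * ‖k‖) atTop (𝓝 0))
  filter_upwards [eventually_ne_atTop 0] with n hn
  have hpow : ‖(y * k) ^ n‖ ≤ ‖y ^ n‖ * ‖k‖ ^ n := by
    rw [hyk.mul_pow]
    exact (norm_mul_le _ _).trans (by gcongr; exact norm_pow_le' k (Nat.pos_of_ne_zero hn))
  calc ‖(y * k) ^ n‖ ^ (1 / n : ℝ) ≤ (‖y ^ n‖ * ‖k‖ ^ n) ^ (1 / n : ℝ) := by gcongr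
    _ = ‖y ^ n‖ ^ (1 / n : ℝ) * ‖k‖ := by
      rw [Real.mul_rpow (norm_nonneg _) (by positivity), one_div,
        Real.pow_rpow_inv_natCast (norm_nonneg k) hn]

theorem neg (h : Quasinilpotent y) : Quasinilpotent (-y) := by
  simpa using h.mul_of_commute (Commute.neg_one_right y)

omit [CompleteSpace A] in
theorem isUnit_one_sub (h : Quasinilpotent y) : IsUnit (1 - y) := by
  have h1 : (1 : ℂ) ∈ resolventSet ℂ y := spectrum.mem_resolventSet_of_spectralRadius_lt <| by
    rw [show spectralRadius ℂ y = 0 from h]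
    simp
  simpa using spectrum.mem_resolventSet_iff.mp h1

theorem summable_norm_smul_pow (h : Quasinilpotent y) {c : ℕ → ℂ} {C r : ℝ} (hr : 0 < r)
    (hc : ∀ n, ‖c n‖ ≤ C * r ^ n) : Summable fun n => ‖c n • y ^ n‖ := by
  have hC : 0 ≤ C := by simpa using (norm_nonneg _).trans (hc 0)
  refine Summable.of_norm_bounded_eventually
    ((summable_geometric_two).mul_left C) ?_
  rw [Nat.cofinite_eq_atTop]
  filter_upwards [h.eventually_norm_pow_le (ε := (2 * r)⁻¹) (by positivity)] with n hn
  rw [norm_norm, norm_smul]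
  calc ‖c n‖ * ‖y ^ n‖ ≤ (C * r ^ n) * (2 * r)⁻¹ ^ n := by gcongr; exact hc n
    _ = C * (1 / 2) ^ n := by
      rw [mul_assoc, ← mul_pow]; congr 2; field_simp

end Quasinilpotent

end BanachAlgebra

open Finset.Nat in
theorem Nat.sum_antidiagonal_centralBinom_mul_centralBinom (n : ℕ) :
    ∑ p ∈ antidiagonal n, centralBinom p.1 * centralBinom p.2 = 4 ^ n := by
  let T (n : ℕ) := ∑ p ∈ antidiagonal n, centralBinom p.1 * centralBinom p.2
  let W (n : ℕ) := ∑ p ∈ antidiagonal n, p.1 * (centralBinom p.1 * centralBinom p.2)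
  -- swapping the halves of the antidiagonal turns `W n` into `∑ p.2 * ⋯`, and `p.1 + p.2 = n`
  have hsymm (n : ℕ) : 2 * W n = n * T n := by
    have hswap : W n = ∑ p ∈ antidiagonal n, p.2 * (centralBinom p.1 * centralBinom p.2) := by
      rw [← sum_antidiagonal_swap]
      exact sum_congr rfl fun p _ => by simp only [Prod.fst_swap, Prod.snd_swap]; ring
    rw [two_mul]
    nth_rewrite 2 [hswap]
    rw [← sum_add_distrib, mul_sum]
    refine sum_congr rfl fun p hp => ?_
    rw [← add_mul, mem_antidiagonal.mp hp]
  have hrec (n : ℕ) : W (n + 1) = 4 * W n + 2 * T n := by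
    simp only [W, T, sum_antidiagonal_succ, zero_mul, zero_add, mul_sum, ← sum_add_distrib]
    refine sum_congr rfl fun p _ => ?_
    rw [← mul_assoc, succ_mul_centralBinom_succ]
    ring
  have hT (n : ℕ) : T n = 4 ^ n := by
    induction n with
    | zero => simp [T]
    | succ n ih =>
      refine Nat.eq_of_mul_eq_mul_left n.succ_pos ?_
      calc (n + 1) * T (n + 1) = 2 * W (n + 1) := (hsymm (n + 1)).symm
        _ = 4 * (2 * W n) + 4 * T n := by rw [hrec]; ring
        _ = (n + 1) * 4 ^ (n + 1) := by rw [hsymm, ih]; ring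
  exact hT n

section Commutative

variable {B : Type*} [NormedCommRing B] [NormedAlgebra ℂ B] [CompleteSpace B]

theorem Quasinilpotent.exists_sq_mul_one_sub_four_mul_eq_one {v : B} (hv : Quasinilpotent v) :
    ∃ t : B, t ^ 2 * (1 - 4 * v) = 1 ∧ Quasinilpotent (t - 1) := by
  have hbound (n : ℕ) : ‖(n.centralBinom : ℂ)‖ ≤ 1 * 4 ^ n := by
    rw [one_mul, Complex.norm_natCast]
    exact_mod_cast n.centralBinom_le_four_pow
  have hsum := hv.summable_norm_smul_pow four_pos hbound
  have hsum_succ := hv.summable_norm_smul_pow (c := fun n => ((n + 1).centralBinom : ℂ))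
    (C := 4) four_pos fun n => by simpa [pow_succ, mul_comm] using hbound (n + 1)
  have hgeom : Summable ((4 * v) ^ ·) := by
    refine (hv.summable_norm_smul_pow (c := fun n => 4 ^ n) (C := 1) four_pos
      fun n => by simp).of_norm.congr fun n => ?_
    rw [← smul_pow, Algebra.smul_def, map_ofNat]
  set t := ∑' n, (n.centralBinom : ℂ) • v ^ n
  have hsq : t ^ 2 = ∑' n, (4 * v) ^ n := by
    rw [sq, tsum_mul_tsum_eq_tsum_sum_antidiagonal_of_summable_norm hsum hsum]
    refine tsum_congr fun n => ?_
    have hterm : ∀ p ∈ antidiagonal n,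
        ((p.1.centralBinom : ℂ) • v ^ p.1) * ((p.2.centralBinom : ℂ) • v ^ p.2)
          = ((p.1.centralBinom * p.2.centralBinom : ℕ) : ℂ) • v ^ n := fun p hp => by
      rw [smul_mul_smul_comm, ← pow_add, mem_antidiagonal.mp hp, Nat.cast_mul]
    rw [sum_congr rfl hterm, ← sum_smul, ← Nat.cast_sum,
      Nat.sum_antidiagonal_centralBinom_mul_centralBinom, mul_pow, Nat.cast_pow, Algebra.smul_def,
      map_pow, Nat.cast_ofNat, map_ofNat]
  have hshift : t = 1 + v * ∑' n, ((n + 1).centralBinom : ℂ) • v ^ n := by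
    rw [show t = _ from hsum.of_norm.tsum_eq_zero_add, ← hsum_succ.of_norm.tsum_mul_left]
    simp only [Nat.centralBinom_zero, Nat.cast_one, pow_zero, one_smul, mul_smul_comm, ← pow_succ']
  refine ⟨t, by rw [hsq, hgeom.tsum_pow_mul_one_sub], ?_⟩
  rw [hshift, add_sub_cancel_left]
  exact hv.mul_of_commute (Commute.all _ _)

theorem Quasinilpotent.exists_isIdempotentElem_quasinilpotent_sub {e : B}
    (he : Quasinilpotent (e - e ^ 2)) : ∃ p : B, IsIdempotentElem p ∧ Quasinilpotent (p - e) := by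
  obtain ⟨t, ht, ht1⟩ := he.exists_sq_mul_one_sub_four_mul_eq_one
  obtain ⟨h, h2⟩ : ∃ h : B, 2 * h = 1 :=
    ⟨algebraMap ℂ B (1 / 2), by rw [← map_ofNat (algebraMap ℂ B) 2, ← map_mul]; norm_num⟩
  have hj : ((2 * e - 1) * t) ^ 2 = 1 := by linear_combination ht
  refine ⟨h * (1 + (2 * e - 1) * t), ?_, ?_⟩
  · unfold IsIdempotentElem
    linear_combination h ^ 2 * hj + (h + h * (2 * e - 1) * t) * h2
  · rw [show h * (1 + (2 * e - 1) * t) - e = (t - 1) * (h * (2 * e - 1)) by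
      linear_combination e * h2]
    exact ht1.mul_of_commute (Commute.all _ _)

theorem hasGDrazin_of_isIdempotentElem {a x p : B} (hq : Quasinilpotent (a - a ^ 2 * x))
    (hp : IsIdempotentElem p) (hpe : Quasinilpotent (p - a * x)) : HasGDrazin a := by
  obtain ⟨s, hs⟩ := hpe.isUnit_one_sub.exists_right_inv
  obtain ⟨r, hr⟩ := hpe.neg.isUnit_one_sub.exists_right_inv
  unfold IsIdempotentElem at hp
  have hpes : p * (a * x) * s = p := by linear_combination s * hp + p * hs
  refine ⟨x * p * s, mul_comm _ _, by linear_combination (-x * p * s) * hpes - x * s * hp, ?_⟩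
  rw [show a - a ^ 2 * (x * p * s) = (a - a ^ 2 * x) * ((1 - p) * r) by
    linear_combination (-a) * hpes + (-a * (1 - p)) * hr + (-r * a) * hp]
  exact hq.mul_of_commute (Commute.all _ _)

theorem hasGDrazin_of_quasinilpotent_sub_sq_mul {a x : B} (hq : Quasinilpotent (a - a ^ 2 * x)) :
    HasGDrazin a := by
  have he : Quasinilpotent (a * x - (a * x) ^ 2) := by
    rw [show a * x - (a * x) ^ 2 = (a - a ^ 2 * x) * x by ring]
    exact hq.mul_of_commute (Commute.all _ _)
  obtain ⟨p, hp, hpe⟩ := he.exists_isIdempotentElem_quasinilpotent_sub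
  exact hasGDrazin_of_isIdempotentElem hq hp hpe

end Commutative

theorem HasGDrazin.map {A B : Type*} [NormedRing A] [NormedAlgebra ℂ A] [CompleteSpace A]
    [NormedRing B] [NormedAlgebra ℂ B] [CompleteSpace B] (f : B →ₐ[ℂ] A) (hf : ∀ z, ‖f z‖ = ‖z‖)
    {y : B} (hy : HasGDrazin y) : HasGDrazin (f y) := by
  obtain ⟨b, hyb, hbyb, hq⟩ := hy
  refine ⟨f b, by rw [← map_mul, hyb, map_mul], by rw [← map_mul, ← map_mul, ← hbyb], ?_⟩
  rw [← map_pow, ← map_mul, ← map_sub]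
  exact (quasinilpotent_map_iff f hf).mpr hq

theorem stmt0 {A : Type*} [NormedRing A] [NormedAlgebra ℂ A] [CompleteSpace A] (a : A) :
    HasGDrazin a ↔ ∃ x : A, a * x = x * a ∧ Quasinilpotent (a - a ^ 2 * x) := by
  refine ⟨fun ⟨b, hab, _, hq⟩ => ⟨b, hab, hq⟩, fun ⟨x, hax, hq⟩ => ?_⟩
  let S := Subalgebra.centralizer ℂ (Set.centralizer ({a, x} : Set A))
  have hpair : ∀ y ∈ ({a, x} : Set A), ∀ z ∈ ({a, x} : Set A), y * z = z * y := by
    simp only [Set.mem_insert_iff, Set.mem_singleton_iff]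
    rintro _ (rfl | rfl) _ (rfl | rfl) <;> first | rfl | exact hax | exact hax.symm
  let _ : NormedCommRing S :=
    { (inferInstance : NormedRing S) with
      mul_comm := fun y z => Subtype.ext <|
        Set.centralizer_centralizer_comm_of_comm hpair _ y.2 _ z.2 }
  have : CompleteSpace S := (Set.isClosed_centralizer _).completeSpace_coe
  have ha : a ∈ S := Set.subset_centralizer_centralizer (by simp)
  have hx : x ∈ S := Set.subset_centralizer_centralizer (by simp)
  have hqS : Quasinilpotent (⟨a, ha⟩ - ⟨a, ha⟩ ^ 2 * ⟨x, hx⟩ : S) :=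
    (quasinilpotent_map_iff S.val fun _ => rfl).mp hq
  exact (hasGDrazin_of_quasinilpotent_sub_sq_mul hqS).map S.val fun _ => rfl
end

section
/- If a is an element of a complex unital Banach algebra A and there exists x ∈ A commuting with a such that a − a²x is quasinilpotent, then setting z = xax, the element z commutes with a, a − a²z is quasinilpotent, and z − z²a is quasinilpotent. -/
/-!
With `q = a - a²x`, commutativity of `a` and `x` gives the factorizations
`a - a²z = (1 + ax) q` and `z - z²a = x²(1 + ax) q`, where both factors in front commute
with `q`. By Gelfand's formula the spectral radius is submultiplicative on commuting
elements, so a quasinilpotent element times an element commuting with it is quasinilpotent.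
-/

open Filter Finset

open scoped NNReal ENNReal

section BanachAlgebra

variable {A : Type*} [NormedRing A] [NormedAlgebra ℂ A] [CompleteSpace A]

theorem spectrum.spectralRadius_ne_top (a : A) : spectralRadius ℂ a ≠ ∞ :=
  ((spectralRadius_le_pow_nnnorm_pow_one_div ℂ a 0).trans_lt (by simp [ENNReal.mul_lt_top])).ne

theorem Commute.spectralRadius_mul_le {a b : A} (h : Commute a b) :
    spectralRadius ℂ (a * b) ≤ spectralRadius ℂ a * spectralRadius ℂ b := by
  have hprod : Tendsto
      (fun n : ℕ => (‖a ^ n‖₊ : ℝ≥0∞) ^ (1 / n : ℝ) * (‖b ^ n‖₊ : ℝ≥0∞) ^ (1 / n : ℝ))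
      atTop (nhds (spectralRadius ℂ a * spectralRadius ℂ b)) :=
    ENNReal.Tendsto.mul (spectrum.pow_nnnorm_pow_one_div_tendsto_nhds_spectralRadius a)
      (.inr (spectrum.spectralRadius_ne_top b))
      (spectrum.pow_nnnorm_pow_one_div_tendsto_nhds_spectralRadius b)
      (.inr (spectrum.spectralRadius_ne_top a))
  have hle : ∀ n : ℕ, (‖(a * b) ^ n‖₊ : ℝ≥0∞) ^ (1 / n : ℝ) ≤
      (‖a ^ n‖₊ : ℝ≥0∞) ^ (1 / n : ℝ) * (‖b ^ n‖₊ : ℝ≥0∞) ^ (1 / n : ℝ) := fun n => by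
    rw [← ENNReal.mul_rpow_of_nonneg _ _ (by positivity), h.mul_pow]
    gcongr
    exact_mod_cast nnnorm_mul_le _ _
  calc spectralRadius ℂ (a * b)
      ≤ atTop.liminf fun n : ℕ => (‖(a * b) ^ n‖₊ : ℝ≥0∞) ^ (1 / n : ℝ) :=
        spectrum.spectralRadius_le_liminf_pow_nnnorm_pow_one_div ℂ _
    _ ≤ _ := liminf_le_liminf (Eventually.of_forall hle)
    _ = _ := hprod.liminf_eq

theorem Quasinilpotent.mul_left_of_commute {c q : A} (h : Commute c q)
    (hq : Quasinilpotent q) : Quasinilpotent (c * q) := by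
  unfold Quasinilpotent at hq ⊢
  simpa [hq] using h.spectralRadius_mul_le

end BanachAlgebra

section Identities

variable {R : Type*} [Ring R] {a x : R}

theorem Commute.sub_sq_mul_sandwich_eq (h : Commute a x) :
    a - a ^ 2 * (x * a * x) = (1 + a * x) * (a - a ^ 2 * x) := by
  have hx : ∀ w : R, x * (a * w) = a * (x * w) := fun w => h.symm.left_comm w
  simp only [add_mul, mul_sub, one_mul, pow_two, mul_assoc, hx, h.symm.eq]
  abel

theorem Commute.sandwich_sub_sq_mul_eq (h : Commute a x) :
    x * a * x - (x * a * x) ^ 2 * a = x ^ 2 * (1 + a * x) * (a - a ^ 2 * x) := by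
  have hx : ∀ w : R, x * (a * w) = a * (x * w) := fun w => h.symm.left_comm w
  simp only [mul_add, add_mul, mul_sub, mul_one, pow_two, mul_assoc, hx, h.symm.eq]
  abel

end Identities

theorem stmt1 {A : Type*} [NormedRing A] [NormedAlgebra ℂ A] [CompleteSpace A] (a x : A)
    (hcomm : a * x = x * a) (hq : Quasinilpotent (a - a ^ 2 * x)) :
    a * (x * a * x) = (x * a * x) * a ∧
      Quasinilpotent (a - a ^ 2 * (x * a * x)) ∧
      Quasinilpotent ((x * a * x) - (x * a * x) ^ 2 * a) := by
  have hax : Commute a x := hcomm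
  have haq : Commute a (a - a ^ 2 * x) :=
    (Commute.refl a).sub_right (((Commute.refl a).pow_right 2).mul_right hax)
  have hxq : Commute x (a - a ^ 2 * x) :=
    hax.symm.sub_right ((hax.symm.pow_right 2).mul_right (Commute.refl x))
  have hfactor : Commute (1 + a * x) (a - a ^ 2 * x) :=
    (Commute.one_left _).add_left (haq.mul_left hxq)
  refine ⟨((hax.mul_right (Commute.refl a)).mul_right hax).eq, ?_, ?_⟩
  · rw [hax.sub_sq_mul_sandwich_eq]
    exact hq.mul_left_of_commute hfactor
  · rw [hax.sandwich_sub_sq_mul_eq]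
    exact hq.mul_left_of_commute ((hxq.pow_left 2).mul_left hfactor)
end

section
/- An element a of a complex unital Banach algebra A has a g-Drazin inverse if and only if there exists an invertible u commuting with a such that au has strongly g-Drazin inverse, i.e., au − (au)² is quasinilpotent. -/
/-!
If `b` is a g-Drazin inverse of `a`, then `p = ab` is idempotent and `q = a - a²b` is
quasinilpotent with `pq = 0`; the unit `u = b + 1 - ab` (with inverse `a²b + 1 - ab`) gives
`au = p + q`, so `au - (au)² = q(1 - q)` is quasinilpotent.

Conversely, let `x = au` with `q = x - x²` quasinilpotent. With `C(t) = ∑ Cₙ tⁿ` the generating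
function of the Catalan numbers, `C = 1 + tC²` makes `s = 1 - 2qC(q)` a square root of
`1 - 4q = (1 - 2x)²`, and `s` is a unit because `1 - s` is quasinilpotent. Hence
`j = (1 - 2x)s⁻¹` is an involution, `e = (1 - j)/2` is an idempotent and `x - e = (1 - s)j/2` is
quasinilpotent. Then `e(1 + x - e)⁻¹` is a g-Drazin inverse of `x` commuting with everything that
commutes with `x`, in particular with `u`, and multiplying it by `u` gives one of `a = xu⁻¹`.
-/

open Filter Finset

def IsGDrazinInverse {A : Type*} [Ring A] [Algebra ℂ A] (a b : A) : Prop :=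
  a * b = b * a ∧ b = b * a * b ∧ Quasinilpotent (a - a ^ 2 * b)

open scoped ENNReal

section Quasinilpotent

variable {A : Type*} [NormedRing A] [NormedAlgebra ℂ A] {q : A}

theorem Quasinilpotent.isUnit_one_sub_s3 (hq : Quasinilpotent q) : IsUnit (1 - q) := by
  simpa using spectrum.isUnit_one_sub_smul_of_lt_inv_radius (𝕜 := ℂ) (a := q) (z := 1)
    (by simp [show spectralRadius ℂ q = 0 from hq])

variable [CompleteSpace A]

theorem Quasinilpotent.mul_of_commute_s3 (hq : Quasinilpotent q) {z : A} (h : Commute q z) :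
    Quasinilpotent (q * z) := by
  have hgelfand : Tendsto (fun n : ℕ => (‖q ^ n‖₊ : ℝ≥0∞) ^ (1 / n : ℝ)) atTop (nhds 0) :=
    hq ▸ spectrum.pow_nnnorm_pow_one_div_tendsto_nhds_spectralRadius q
  have hbound : Tendsto (fun n : ℕ => (‖q ^ n‖₊ : ℝ≥0∞) ^ (1 / n : ℝ) * ‖z‖₊) atTop (nhds 0) := by
    simpa using ENNReal.Tendsto.mul_const hgelfand (b := (‖z‖₊ : ℝ≥0∞)) (Or.inr ENNReal.coe_ne_top)
  refine le_antisymm (le_of_tendsto_of_tendsto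
    (spectrum.pow_nnnorm_pow_one_div_tendsto_nhds_spectralRadius (q * z)) hbound ?_) bot_le
  filter_upwards [eventually_ge_atTop 1] with n hn
  have hnorm : ‖(q * z) ^ n‖₊ ≤ ‖q ^ n‖₊ * ‖z‖₊ ^ n := by
    rw [h.mul_pow]
    exact (nnnorm_mul_le _ _).trans (by gcongr; exact nnnorm_pow_le' z hn)
  calc (‖(q * z) ^ n‖₊ : ℝ≥0∞) ^ (1 / n : ℝ)
      ≤ ((‖q ^ n‖₊ : ℝ≥0∞) * (‖z‖₊ : ℝ≥0∞) ^ n) ^ (1 / n : ℝ) := by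
        gcongr
        exact_mod_cast hnorm
    _ = (‖q ^ n‖₊ : ℝ≥0∞) ^ (1 / n : ℝ) * ‖z‖₊ := by
        rw [ENNReal.mul_rpow_of_nonneg _ _ (by positivity), one_div,
          ENNReal.pow_rpow_inv_natCast (by omega)]

theorem Quasinilpotent.eventually_norm_pow_le_s3 (hq : Quasinilpotent q) {ε : ℝ} (hε : 0 < ε) :
    ∀ᶠ n in atTop, ‖q ^ n‖ ≤ ε ^ n := by
  have h := (ENNReal.tendsto_toReal ENNReal.zero_ne_top).comp
    (hq ▸ spectrum.pow_norm_pow_one_div_tendsto_nhds_spectralRadius q)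
  filter_upwards [h.eventually (gt_mem_nhds hε), eventually_ge_atTop 1] with n hn hn1
  rw [Function.comp_apply, ENNReal.toReal_ofReal (by positivity)] at hn
  calc ‖q ^ n‖ = (‖q ^ n‖ ^ (1 / n : ℝ)) ^ n := by
        rw [one_div, Real.rpow_inv_natCast_pow (norm_nonneg _) (by omega)]
    _ ≤ ε ^ n := by gcongr

theorem Quasinilpotent.summable_mul_norm_pow (hq : Quasinilpotent q) (r : ℝ) :
    Summable fun n => r ^ n * ‖q ^ n‖ := by
  refine Summable.of_norm_bounded_eventually summable_geometric_two ?_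
  rw [Nat.cofinite_eq_atTop]
  filter_upwards [hq.eventually_norm_pow_le_s3 (ε := 1 / (2 * (|r| + 1))) (by positivity)] with n hn
  rw [norm_mul, norm_norm, norm_pow, Real.norm_eq_abs]
  calc |r| ^ n * ‖q ^ n‖ ≤ (|r| + 1) ^ n * (1 / (2 * (|r| + 1))) ^ n := by gcongr; linarith
    _ = (1 / 2) ^ n := by rw [← mul_pow]; field_simp

end Quasinilpotent

section Catalan

theorem catalan_le_four_pow (n : ℕ) : catalan n ≤ 4 ^ n :=
  (Nat.le_mul_of_pos_left _ n.succ_pos).trans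
    ((succ_mul_catalan_eq_centralBinom n).trans_le (Nat.centralBinom_le_four_pow n))

variable {A : Type*}

noncomputable def catalanSeries [Semiring A] [TopologicalSpace A] (q : A) : A :=
  ∑' n, catalan n • q ^ n

theorem Commute.catalanSeries_right [Semiring A] [TopologicalSpace A] [IsTopologicalSemiring A]
    [T2Space A] {q y : A} (h : Commute y q) : Commute y (catalanSeries q) :=
  Commute.tsum_right y fun n => (h.pow_right n).smul_right _

variable [NormedRing A] [NormedAlgebra ℂ A] [CompleteSpace A] {q : A}

theorem Quasinilpotent.summable_norm_catalan_smul_pow (hq : Quasinilpotent q) :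
    Summable fun n => ‖catalan n • q ^ n‖ :=
  (hq.summable_mul_norm_pow 4).of_nonneg_of_le (fun _ => norm_nonneg _) fun n =>
    (norm_nsmul_le ..).trans (by gcongr; exact_mod_cast catalan_le_four_pow n)

theorem Quasinilpotent.catalanSeries_eq (hq : Quasinilpotent q) :
    catalanSeries q = 1 + q * catalanSeries q ^ 2 := by
  have hs := hq.summable_norm_catalan_smul_pow
  have hconv : ∀ n, ∑ ij ∈ antidiagonal n, (catalan ij.1 • q ^ ij.1) * (catalan ij.2 • q ^ ij.2)
      = catalan (n + 1) • q ^ n := fun n => by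
    rw [catalan_succ', sum_smul]
    refine sum_congr rfl fun ij hij => ?_
    rw [smul_mul_smul_comm, ← pow_add, mem_antidiagonal.mp hij]
  have hsummable : Summable fun n => catalan (n + 1) • q ^ n := by
    simpa only [hconv] using (summable_norm_sum_mul_antidiagonal_of_summable_norm hs hs).of_norm
  have hsq : catalanSeries q ^ 2 = ∑' n, catalan (n + 1) • q ^ n := by
    rw [sq, catalanSeries, tsum_mul_tsum_eq_tsum_sum_antidiagonal_of_summable_norm hs hs]
    exact tsum_congr hconv
  rw [hsq, ← hsummable.tsum_mul_left, catalanSeries, hs.of_norm.tsum_eq_zero_add]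
  simp only [catalan_zero, pow_zero, one_smul, pow_succ', mul_smul_comm]

theorem Quasinilpotent.one_sub_mul_two_mul_catalanSeries_sq (hq : Quasinilpotent q) :
    (1 - q * (2 * catalanSeries q)) ^ 2 = 1 - 4 * q := by
  set c := catalanSeries q
  have hc2 : Commute (2 * c) q :=
    (Commute.ofNat_left 2 q).mul_left ((Commute.refl q).catalanSeries_right).symm
  calc (1 - q * (2 * c)) ^ 2 = 1 - 4 * (q * (c - q * c ^ 2)) := by
        rw [sq, sub_mul, mul_sub, mul_sub, hc2.mul_mul_mul_comm]
        noncomm_ring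
    _ = 1 - 4 * q := by rw [sub_eq_iff_eq_add.mpr hq.catalanSeries_eq, mul_one]

end Catalan

theorem isIdempotentElem_inv_two_smul_one_sub {𝕜 R : Type*} [Field 𝕜] [NeZero (2 : 𝕜)] [Ring R]
    [Algebra 𝕜 R] {j : R} (hj : j * j = 1) : IsIdempotentElem ((2 : 𝕜)⁻¹ • (1 - j)) := by
  have hsq : (1 - j) * (1 - j) = (2 : 𝕜) • (1 - j) := by
    simp only [two_smul, sub_mul, mul_sub, one_mul, mul_one, hj]
    abel
  rw [IsIdempotentElem, smul_mul_smul_comm, hsq, smul_smul, mul_assoc,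
    inv_mul_cancel₀ two_ne_zero, mul_one]

section GDrazin

variable {A : Type*} [NormedRing A] [NormedAlgebra ℂ A] [CompleteSpace A]

theorem exists_isIdempotentElem_of_quasinilpotent_sub_sq {x : A}
    (hx : Quasinilpotent (x - x ^ 2)) :
    ∃ e : A, IsIdempotentElem e ∧ Quasinilpotent (x - e) ∧ ∀ y, Commute y x → Commute y e := by
  set q := x - x ^ 2
  have hq : ∀ y, Commute y x → Commute y q := fun y hy => hy.sub_right (hy.pow_right 2)
  have hc : ∀ y, Commute y x → Commute y (2 * catalanSeries q) := fun y hy =>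
    (Commute.ofNat_right y 2).mul_right (hq y hy).catalanSeries_right
  have hroot : Quasinilpotent (q * (2 * catalanSeries q)) :=
    hx.mul_of_commute_s3 (hc q (hq x (.refl x)).symm)
  obtain ⟨s, hs⟩ := hroot.isUnit_one_sub_s3
  have hs1 : Quasinilpotent (1 - s : A) := by rwa [hs, sub_sub_cancel]
  have hsx : ∀ y, Commute y x → Commute y s := fun y hy => by
    rw [hs]
    exact (Commute.one_right y).sub_right ((hq y hy).mul_right (hc y hy))
  set t := 1 - 2 * x
  have htx : ∀ y, Commute y x → Commute y t := fun y hy =>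
    (Commute.one_right y).sub_right ((Commute.ofNat_right y 2).mul_right hy)
  have hts : Commute t s := hsx t (htx x (.refl x)).symm
  have ht2 : t * t = s * s := by
    rw [← sq, ← sq, hs, hx.one_sub_mul_two_mul_catalanSeries_sq]
    simp only [t, q]
    noncomm_ring
  set j := t * ↑s⁻¹
  have hjx : ∀ y, Commute y x → Commute y j := fun y hy =>
    (htx y hy).mul_right (hsx y hy).units_inv_right
  have hj : j * j = 1 := by
    rw [hts.units_inv_right.symm.mul_mul_mul_comm, ht2]
    simp [mul_assoc]
  have hsj : s * j = t := by rw [← mul_assoc, hts.symm.eq, Units.mul_inv_cancel_right]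
  refine ⟨(2 : ℂ)⁻¹ • (1 - j), isIdempotentElem_inv_two_smul_one_sub hj, ?_, fun y hy => ?_⟩
  · have hxe : x - (2 : ℂ)⁻¹ • (1 - j) = (1 - s) * ((2 : ℂ)⁻¹ • j) := by
      rw [sub_mul, one_mul, mul_smul_comm, hsj]
      simp only [t, smul_sub, two_mul]
      module
    rw [hxe]
    exact hs1.mul_of_commute_s3
      ((hjx _ ((Commute.one_left x).sub_left (hsx x (.refl x)).symm)).smul_right _)
  · exact ((Commute.one_right y).sub_right (hjx y hy)).smul_right _

theorem IsIdempotentElem.exists_isGDrazinInverse {x e : A} (he : IsIdempotentElem e)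
    (hex : Commute e x) (hw : Quasinilpotent (x - e)) :
    ∃ d, IsGDrazinInverse x d ∧ ∀ y, Commute y x → Commute y e → Commute y d := by
  have hnegw : Quasinilpotent (-(x - e)) := by
    simpa using hw.mul_of_commute_s3 (Commute.neg_one_right _)
  obtain ⟨v, hv⟩ := hnegw.isUnit_one_sub_s3
  rw [sub_neg_eq_add] at hv
  have hvc : ∀ y, Commute y x → Commute y e → Commute y v := fun y hyx hye => by
    rw [hv]; exact (Commute.one_right y).add_right (hyx.sub_right hye)
  have hxe : x * e = v * e := by rw [hv, add_mul, one_mul, sub_mul, he.eq]; abel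
  have hxd : x * (e * ↑v⁻¹) = e := by
    rw [← mul_assoc, hxe, ← (hvc e hex (.refl e)).eq, Units.mul_inv_cancel_right]
  refine ⟨e * ↑v⁻¹, ⟨?_, ?_, ?_⟩, fun y hyx hye => hye.mul_right (hvc y hyx hye).units_inv_right⟩
  · exact (hex.symm.mul_right (hvc x (.refl x) hex.symm).units_inv_right).eq
  · rw [mul_assoc, hxd, mul_assoc, ← (hvc e hex (.refl e)).units_inv_right.eq, ← mul_assoc, he.eq]
  · have hxx : x - x ^ 2 * (e * ↑v⁻¹) = (x - e) * (1 - e) := by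
      rw [sq, mul_assoc, hxd, mul_sub, sub_mul, sub_mul, he.eq, mul_one, mul_one]
      abel
    rw [hxx]
    exact hw.mul_of_commute_s3 ((Commute.one_right _).sub_right (hex.symm.sub_left (.refl e)))

theorem exists_isGDrazinInverse_of_quasinilpotent_sub_sq {x : A}
    (hx : Quasinilpotent (x - x ^ 2)) :
    ∃ d, IsGDrazinInverse x d ∧ ∀ y, Commute y x → Commute y d := by
  obtain ⟨e, he, hw, hec⟩ := exists_isIdempotentElem_of_quasinilpotent_sub_sq hx
  obtain ⟨d, hd, hdc⟩ := he.exists_isGDrazinInverse (hec x (.refl x)).symm hw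
  exact ⟨d, hd, fun y hy => hdc y hy (hec y hy)⟩

theorem IsGDrazinInverse.mul_units {a b : A} (h : IsGDrazinInverse a b) (u : Aˣ)
    (hua : Commute (u : A) a) (hub : Commute (u : A) b) :
    IsGDrazinInverse (a * u) (↑u⁻¹ * b) := by
  obtain ⟨hab, hb, hq⟩ := h
  have hab' : a * u * (↑u⁻¹ * b) = a * b := by simp [mul_assoc]
  have hba' : ↑u⁻¹ * b * (a * u) = a * b := by
    rw [mul_assoc, ← mul_assoc b, ← (hub.mul_right hua).eq, Units.inv_mul_cancel_left, hab]
  refine ⟨hab'.trans hba'.symm, ?_, ?_⟩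
  · rw [mul_assoc, hab', mul_assoc, ← mul_assoc b, ← hb]
  · have hx : a * u - (a * u) ^ 2 * (↑u⁻¹ * b) = (a - a ^ 2 * b) * u := by
      rw [sq, mul_assoc, hab', mul_assoc, (hua.mul_right hub).eq, sub_mul, sq]
      simp only [mul_assoc]
    rw [hx]
    exact hq.mul_of_commute_s3 (hua.symm.sub_left ((hua.symm.pow_left 2).mul_left hub.symm))

open scoped IsMulCommutative in
theorem IsGDrazinInverse.exists_isUnit_quasinilpotent_mul_sub_sq {a b : A}
    (h : IsGDrazinInverse a b) :
    ∃ u : A, IsUnit u ∧ a * u = u * a ∧ Quasinilpotent (a * u - (a * u) ^ 2) := by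
  obtain ⟨hab, hb, hq⟩ := h
  have := Subring.isMulCommutative_closure (s := {a, b}) (by
    simp only [Set.mem_insert_iff, Set.mem_singleton_iff]
    rintro x (rfl | rfl) y (rfl | rfl) <;> first | rfl | exact hab | exact hab.symm)
  let a' : Subring.closure {a, b} := ⟨a, Subring.subset_closure (by simp)⟩
  let b' : Subring.closure {a, b} := ⟨b, Subring.subset_closure (by simp)⟩
  have hb' : b' = b' * a' * b' := Subtype.ext hb
  have hinv : (b' + 1 - a' * b') * (a' ^ 2 * b' + 1 - a' * b') = 1 := by
    linear_combination (1 - 2 * a' + a' ^ 2) * hb'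
  have hsq : a' * (b' + 1 - a' * b') - (a' * (b' + 1 - a' * b')) ^ 2 =
      (a' - a' ^ 2 * b') * (1 - (a' - a' ^ 2 * b')) := by
    linear_combination (a' - 2 * a' ^ 2) * hb'
  refine ⟨b + 1 - a * b, ⟨⟨_, _, congrArg Subtype.val hinv,
    congrArg Subtype.val ((mul_comm _ _).trans hinv)⟩, rfl⟩, ?_, ?_⟩
  · exact congrArg Subtype.val (mul_comm a' (b' + 1 - a' * b'))
  · convert hq.mul_of_commute_s3 ((Commute.one_right _).sub_right (.refl _)) using 1
    exact congrArg Subtype.val hsq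

end GDrazin

theorem stmt3 {A : Type*} [NormedRing A] [NormedAlgebra ℂ A] [CompleteSpace A] (a : A) :
    HasGDrazin a ↔ ∃ u : A, IsUnit u ∧ a * u = u * a ∧ Quasinilpotent (a * u - (a * u) ^ 2) := by
  constructor
  · rintro ⟨b, hb⟩
    exact IsGDrazinInverse.exists_isUnit_quasinilpotent_mul_sub_sq hb
  · rintro ⟨_, ⟨u, rfl⟩, hau, hq⟩
    obtain ⟨d, hd, hdc⟩ := exists_isGDrazinInverse_of_quasinilpotent_sub_sq hq
    have hu : Commute (u : A) (a * u) := (Commute.symm hau).mul_right (.refl _)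
    have : HasGDrazin (a * u * ↑u⁻¹) :=
      ⟨_, hd.mul_units u⁻¹ hu.units_inv_left (hdc _ hu).units_inv_left⟩
    rwa [Units.mul_inv_cancel_right] at this
end

section
/- An element a of a complex unital Banach algebra A has a g-Drazin inverse if and only if there exists p ∈ A commuting with a such that a + p is invertible and ap is quasinilpotent. (Note: p is not assumed idempotent.) -/
open Filter Finset

/-!
By Koliha's characterization, `a` has a g-Drazin inverse iff some idempotent `e` commuting with
`a` makes `a e + (1 - e)` invertible and `a (1 - e)` quasinilpotent; then `p = 1 - e` works, as
`a + p` is that unit plus a commuting quasinilpotent. Conversely, given `p`, put `U = a + p` and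
`s = a U⁻¹`. Then `s² - s = -a p U⁻²` is quasinilpotent, so `s` lifts to the idempotent
`e = (1 + (2 s - 1) (1 + 4 (s² - s))^(-1/2)) / 2`, where the inverse square root is the binomial
series, convergent because its argument is quasinilpotent. This `e` commutes with everything
that commutes with `s` and differs from `s` by a quasinilpotent, which is what Koliha's
characterization needs.
-/

open scoped Topology

section Idempotent

variable {A : Type*} [Ring A] {e x y : A}

theorem IsIdempotentElem.mul_add_one_sub_mul_mul_add_one_sub (he : IsIdempotentElem e)
    (hye : Commute y e) (h : x * y * e = e) : (x * e + (1 - e)) * (y * e + (1 - e)) = 1 := by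
  have hxeye : x * e * (y * e) = x * y * (e * e) := by
    rw [mul_assoc, ← mul_assoc e, ← hye.eq, mul_assoc, mul_assoc]
  have hfye : (1 - e) * (y * e) = y * ((1 - e) * e) := by
    rw [← mul_assoc, ((Commute.one_left y).sub_left hye.symm).eq, mul_assoc]
  rw [add_mul, mul_add, mul_add, hxeye, hfye, mul_assoc x e, he.eq, h, he.mul_one_sub_self,
    he.one_sub_mul_self, he.one_sub.eq, mul_zero, mul_zero, add_zero, zero_add, add_sub_cancel]

theorem IsIdempotentElem.isUnit_mul_add_one_sub (he : IsIdempotentElem e) (hxe : Commute x e)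
    (hye : Commute y e) (hxy : Commute x y) (h : x * y * e = e) :
    IsUnit (x * e + (1 - e)) :=
  isUnit_iff_exists.mpr ⟨y * e + (1 - e), he.mul_add_one_sub_mul_mul_add_one_sub hye h,
    he.mul_add_one_sub_mul_mul_add_one_sub hxe (hxy.eq ▸ h)⟩

end Idempotent

section Koliha

variable {A : Type*} [Ring A] [Algebra ℂ A] {a : A}

theorem HasGDrazin.exists_isIdempotentElem (h : HasGDrazin a) :
    ∃ e : A, IsIdempotentElem e ∧ Commute a e ∧ IsUnit (a * e + (1 - e)) ∧
      Quasinilpotent (a * (1 - e)) := by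
  obtain ⟨b, hab, hbab, hq⟩ := h
  have he : IsIdempotentElem (a * b) := by
    rw [IsIdempotentElem, mul_assoc, ← mul_assoc b, ← hbab]
  have hae : Commute a (a * b) := (Commute.refl a).mul_right hab
  have hbe : Commute b (a * b) := (Commute.symm hab).mul_right (Commute.refl b)
  refine ⟨a * b, he, hae, he.isUnit_mul_add_one_sub hae hbe hab he.eq, ?_⟩
  rwa [mul_sub, mul_one, ← mul_assoc, ← pow_two]

theorem hasGDrazin_of_isIdempotentElem_s4 {e : A} (he : IsIdempotentElem e) (hae : Commute a e)
    (hu : IsUnit (a * e + (1 - e))) (hq : Quasinilpotent (a * (1 - e))) : HasGDrazin a := by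
  obtain ⟨v, hv⟩ := hu
  have hva : Commute (v : A) a :=
    hv ▸ ((Commute.refl a).mul_left hae.symm).add_left ((Commute.one_left a).sub_left hae.symm)
  have hve : Commute (v : A) e :=
    hv ▸ (hae.mul_left (Commute.refl e)).add_left ((Commute.one_left e).sub_left (Commute.refl e))
  have hab : a * (e * ↑v⁻¹) = e := by
    rw [← mul_assoc, show a * e = v * e by
      rw [hv, add_mul, mul_assoc, he.eq, he.one_sub_mul_self, add_zero],
      hve.eq, Units.mul_inv_cancel_right]
  have hba : e * ↑v⁻¹ * a = e := by
    rw [mul_assoc, hva.units_inv_left.eq, ← mul_assoc, ← hae.eq, mul_assoc, hab]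
  refine ⟨e * ↑v⁻¹, hab.trans hba.symm, ?_, ?_⟩
  · rw [hba, ← mul_assoc, he.eq]
  · rwa [pow_two, mul_assoc, hab, ← mul_one_sub]

theorem hasGDrazin_iff_exists_isIdempotentElem :
    HasGDrazin a ↔ ∃ e : A, IsIdempotentElem e ∧ Commute a e ∧ IsUnit (a * e + (1 - e)) ∧
      Quasinilpotent (a * (1 - e)) :=
  ⟨HasGDrazin.exists_isIdempotentElem, fun ⟨_, he, hae, hu, hq⟩ =>
    hasGDrazin_of_isIdempotentElem_s4 he hae hu hq⟩

end Koliha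

theorem Ring.norm_choose_le {𝕜 : Type*} [RCLike 𝕜] (r : 𝕜) (k : ℕ) :
    ‖Ring.choose r k‖ ≤ (‖r‖ + 1) ^ k := by
  induction k with
  | zero => simp
  | succ k ih =>
    have hrec : ((k + 1 : ℕ) : 𝕜) * Ring.choose r (k + 1) = Ring.choose r k * (r - k) := by
      have := Ring.choose_smul_choose r (Nat.le_succ k)
      rwa [Nat.choose_succ_self_right, show k.succ - k = 1 by omega, Ring.choose_one_right,
        nsmul_eq_mul] at this
    have hk : (0 : ℝ) < k + 1 := by positivity
    rw [← mul_le_mul_iff_right₀ hk]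
    calc (k + 1 : ℝ) * ‖Ring.choose r (k + 1)‖ = ‖Ring.choose r k‖ * ‖r - k‖ := by
          rw [← norm_mul, ← hrec, norm_mul, RCLike.norm_natCast]; push_cast; ring
      _ ≤ (‖r‖ + 1) ^ k * ((k + 1) * (‖r‖ + 1)) := by
          gcongr
          calc ‖r - k‖ ≤ ‖r‖ + k := by simpa using norm_sub_le r (k : 𝕜)
            _ ≤ (k + 1) * (‖r‖ + 1) := by
              nlinarith [norm_nonneg r, (k.cast_nonneg : (0 : ℝ) ≤ k)]
      _ = (k + 1) * (‖r‖ + 1) ^ (k + 1) := by ring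

theorem Ring.choose_neg_one {𝕜 : Type*} [Field 𝕜] [CharZero 𝕜] (k : ℕ) :
    Ring.choose (-1 : 𝕜) k = (-1) ^ k := by
  rw [Ring.choose_neg, add_sub_cancel_left, Ring.choose_natCast, Nat.choose_self, Nat.cast_one,
    Units.smul_def, Int.coe_negOnePow_natCast, zsmul_one, Int.cast_pow, Int.cast_neg, Int.cast_one]

section BanachAlgebra

variable {A : Type*} [NormedRing A] [NormedAlgebra ℂ A] [CompleteSpace A]

theorem quasinilpotent_iff_tendsto {q : A} :
    Quasinilpotent q ↔ Tendsto (fun k : ℕ => ‖q ^ k‖ ^ (1 / k : ℝ)) atTop (𝓝 0) := by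
  have gelfand := spectrum.pow_norm_pow_one_div_tendsto_nhds_spectralRadius q
  constructor
  · intro hq
    rw [show spectralRadius ℂ q = 0 from hq] at gelfand
    simpa [Function.comp_def, ENNReal.toReal_ofReal, Real.rpow_nonneg] using
      (ENNReal.tendsto_toReal ENNReal.zero_ne_top).comp gelfand
  · intro h
    exact tendsto_nhds_unique gelfand (by simpa using ENNReal.tendsto_ofReal h)

namespace Quasinilpotent

variable {q : A}

theorem eventually_norm_pow_lt (hq : Quasinilpotent q) {r : ℝ} (hr : 0 < r) :
    ∀ᶠ k : ℕ in atTop, ‖q ^ k‖ < r ^ k := by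
  filter_upwards [(quasinilpotent_iff_tendsto.mp hq).eventually_lt_const hr,
    eventually_ge_atTop 1] with k hk hk1
  have hk0 : (0 : ℝ) < k := by exact_mod_cast hk1
  rwa [one_div, Real.rpow_inv_lt_iff_of_pos (norm_nonneg _) hr.le hk0, Real.rpow_natCast] at hk

theorem mul_of_commute_s4 (hq : Quasinilpotent q) {x : A} (h : Commute q x) :
    Quasinilpotent (q * x) := by
  rw [quasinilpotent_iff_tendsto] at hq ⊢
  refine squeeze_zero' (Eventually.of_forall fun k => Real.rpow_nonneg (norm_nonneg _) _)
    ?_ (by simpa only [zero_mul] using hq.mul_const ‖x‖)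
  filter_upwards [eventually_ge_atTop 1] with k hk
  have hk0 : (k : ℝ) ≠ 0 := by positivity
  calc ‖(q * x) ^ k‖ ^ (1 / k : ℝ) ≤ (‖q ^ k‖ * ‖x‖ ^ k) ^ (1 / k : ℝ) := by
        rw [h.mul_pow]
        gcongr
        exact (norm_mul_le _ _).trans (by gcongr; exact norm_pow_le' x hk)
    _ = ‖q ^ k‖ ^ (1 / k : ℝ) * ‖x‖ := by
        rw [Real.mul_rpow (by positivity) (by positivity), one_div,
          Real.pow_rpow_inv_natCast (norm_nonneg x) (by omega)]

theorem smul (hq : Quasinilpotent q) (z : ℂ) : Quasinilpotent (z • q) := by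
  rw [Algebra.smul_def, Algebra.commutes]
  exact hq.mul_of_commute_s4 (Algebra.commutes z q).symm

theorem isUnit_add (hq : Quasinilpotent q) {u : A} (hu : IsUnit u) (h : Commute u q) :
    IsUnit (u + q) := by
  have one_add : ∀ {r : A}, Quasinilpotent r → IsUnit (1 + r) := fun {r} hr => by
    simpa using spectrum.isUnit_one_sub_smul_of_lt_inv_radius (a := r) (z := (-1 : ℂ))
      (by simp [show spectralRadius ℂ r = 0 from hr])
  obtain ⟨u, rfl⟩ := hu
  rw [show (u : A) + q = u * (1 + ↑u⁻¹ * q) by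
    rw [mul_add, mul_one, Units.mul_inv_cancel_left]]
  exact u.isUnit.mul (one_add (by
    rw [(h.units_inv_left).eq]; exact hq.mul_of_commute_s4 h.units_inv_left.symm))

theorem summable_norm_smul_pow_s4 (hq : Quasinilpotent q) {c : ℕ → ℂ} {C R : ℝ}
    (hc : ∀ k, ‖c k‖ ≤ C * R ^ k) : Summable fun k => ‖c k • q ^ k‖ := by
  set r := (|R| + 1)⁻¹
  have hr : 0 < r := by positivity
  have hRr : |R| * r < 1 := by
    rw [← div_eq_mul_inv, div_lt_one (by positivity)]; linarith
  refine Summable.of_norm_bounded_eventually_nat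
    ((summable_geometric_of_lt_one (by positivity) hRr).mul_left |C|) ?_
  filter_upwards [hq.eventually_norm_pow_lt hr] with k hk
  rw [norm_norm, norm_smul]
  calc ‖c k‖ * ‖q ^ k‖ ≤ |C * R ^ k| * r ^ k :=
        mul_le_mul ((hc k).trans (le_abs_self _)) hk.le (norm_nonneg _) (abs_nonneg _)
    _ = |C| * (|R| * r) ^ k := by rw [abs_mul, abs_pow, mul_pow, mul_assoc]

theorem tsum_pow_mul_one_sub (hq : Quasinilpotent q) : (∑' k, q ^ k) * (1 - q) = 1 := by
  have hs : Summable fun k => q ^ k := by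
    simpa using (hq.summable_norm_smul_pow_s4 (c := 1) (C := 1) (R := 1) (by simp)).of_norm
  have hS := hs.tsum_eq_zero_add
  simp only [pow_zero, pow_succ] at hS
  rw [mul_one_sub, ← hs.tsum_mul_right, hS, add_sub_cancel_right]

theorem tsum_smul_pow_mul_tsum_smul_pow (hq : Quasinilpotent q) {c d : ℕ → ℂ} {C R D S : ℝ}
    (hc : ∀ k, ‖c k‖ ≤ C * R ^ k) (hd : ∀ k, ‖d k‖ ≤ D * S ^ k) :
    (∑' k, c k • q ^ k) * (∑' k, d k • q ^ k) =
      ∑' m, (∑ ij ∈ antidiagonal m, c ij.1 * d ij.2) • q ^ m := by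
  rw [tsum_mul_tsum_eq_tsum_sum_antidiagonal_of_summable_norm
    (hq.summable_norm_smul_pow_s4 hc) (hq.summable_norm_smul_pow_s4 hd)]
  refine tsum_congr fun m => ?_
  rw [sum_smul]
  refine sum_congr rfl fun ij hij => ?_
  rw [smul_mul_smul_comm, ← pow_add, mem_antidiagonal.mp hij]

theorem tsum_smul_pow_sub_smul_one (hq : Quasinilpotent q) {c : ℕ → ℂ} {C R : ℝ}
    (hc : ∀ k, ‖c k‖ ≤ C * R ^ k) :
    Quasinilpotent (∑' k, c k • q ^ k - c 0 • 1) := by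
  have hc' : ∀ k, ‖c (k + 1)‖ ≤ (C * R) * R ^ k := fun k => by
    rw [mul_assoc, ← pow_succ']; exact hc (k + 1)
  have hs := (hq.summable_norm_smul_pow_s4 hc').of_norm
  rw [(hq.summable_norm_smul_pow_s4 hc).of_norm.tsum_eq_zero_add, pow_zero, add_sub_cancel_left,
    show (fun k => c (k + 1) • q ^ (k + 1)) = fun k => q * (c (k + 1) • q ^ k) by
      ext k; rw [pow_succ', mul_smul_comm], hs.tsum_mul_left]
  exact hq.mul_of_commute_s4
    (Commute.tsum_right q fun k => ((Commute.refl q).pow_right k).smul_right _)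

theorem exists_mul_self_mul_one_add_eq_one (hq : Quasinilpotent q) :
    ∃ w : A, w * w * (1 + q) = 1 ∧ (∀ t, Commute t q → Commute t w) ∧
      Quasinilpotent (w - 1) := by
  set c : ℕ → ℂ := fun k => Ring.choose (-2⁻¹ : ℂ) k
  have hc : ∀ k, ‖c k‖ ≤ 1 * (‖(-2⁻¹ : ℂ)‖ + 1) ^ k := fun k => by
    rw [one_mul]; exact Ring.norm_choose_le _ k
  refine ⟨∑' k, c k • q ^ k, ?_, fun t ht => ?_, ?_⟩
  · -- Chu–Vandermonde for `-1/2 + -1/2 = -1`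
    have hsq : ∀ m, ∑ ij ∈ antidiagonal m, c ij.1 * c ij.2 = (-1) ^ m := fun m => by
      rw [← Ring.add_choose_eq m (Commute.all _ _), ← Ring.choose_neg_one]; norm_num
    rw [hq.tsum_smul_pow_mul_tsum_smul_pow hc hc]
    simp only [hsq, ← smul_pow, neg_one_smul]
    simpa using (hq.smul (-1)).tsum_pow_mul_one_sub
  · exact Commute.tsum_right t fun k => (ht.pow_right k).smul_right _
  · simpa [c] using hq.tsum_smul_pow_sub_smul_one hc

end Quasinilpotent

theorem exists_isIdempotentElem_of_quasinilpotent_mul_self_sub {s : A}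
    (hs : Quasinilpotent (s * s - s)) :
    ∃ e : A, IsIdempotentElem e ∧ (∀ t, Commute t s → Commute t e) ∧
      Quasinilpotent (s - e) := by
  obtain ⟨w, hw, hcomm_w, hw1⟩ := (hs.smul 4).exists_mul_self_mul_one_add_eq_one
  set u : A := (4 : ℂ) • (s * s - s)
  have hcomm_u : ∀ t, Commute t s → Commute t u := fun t ht =>
    ((ht.mul_right ht).sub_right ht).smul_right _
  set y : A := (2 : ℂ) • s - 1
  have hcomm_y : ∀ t, Commute t s → Commute t y := fun t ht =>
    (ht.smul_right _).sub_right (Commute.one_right t)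
  have hyy : y * y = 1 + u := by
    simp only [y, u, sub_mul, mul_sub, smul_mul_assoc, mul_smul_comm, one_mul, mul_one]
    module
  have hyw : Commute y w := hcomm_w y (hcomm_u y ((Commute.refl s).smul_left _ |>.sub_left
    (Commute.one_left s)))
  have hx : y * w * (y * w) = 1 := by
    calc y * w * (y * w) = (1 + u) * (w * w) := by
          rw [← hyy, mul_assoc, ← mul_assoc w, ← hyw.eq, mul_assoc, mul_assoc]
      _ = 1 := by
          have h : Commute (1 + u) w := hcomm_w _ ((Commute.one_left u).add_left (Commute.refl u))
          rw [(h.mul_right h).eq, hw]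
  refine ⟨(2⁻¹ : ℂ) • (1 + y * w), ?_, fun t ht => ?_, ?_⟩
  · rw [IsIdempotentElem, smul_mul_smul_comm, add_mul, mul_add, mul_add, hx]
    simp only [one_mul, mul_one]
    module
  · exact ((Commute.one_right t).add_right ((hcomm_y t ht).mul_right
      (hcomm_w t (hcomm_u t ht)))).smul_right _
  · have : s - (2⁻¹ : ℂ) • (1 + y * w) = (-2⁻¹ : ℂ) • ((w - 1) * y) := by
      rw [hyw.eq, sub_mul, one_mul]
      simp only [y]
      module
    rw [this]
    exact (hw1.mul_of_commute_s4 (hyw.symm.sub_left (Commute.one_left y))).smul _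

theorem exists_isIdempotentElem_of_isUnit_add {a p : A} (hap : Commute a p) (hu : IsUnit (a + p))
    (hq : Quasinilpotent (a * p)) :
    ∃ e : A, IsIdempotentElem e ∧ Commute a e ∧ IsUnit (a * e + (1 - e)) ∧
      Quasinilpotent (a * (1 - e)) := by
  obtain ⟨U, hU⟩ := hu
  have hUa : Commute (U : A) a := hU ▸ (Commute.refl a).add_left hap.symm
  have hUp : Commute (U : A) p := hU ▸ hap.add_left (Commute.refl p)
  set s := a * ↑U⁻¹
  have hsU : s * U = a := Units.inv_mul_cancel_right a U
  have hUs : Commute (U : A) s := hUa.mul_right (Commute.refl (U : A)).units_inv_right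
  have hss : s * s - s = a * p * -(↑U⁻¹ * ↑U⁻¹) := by
    have hs : s = (a * a + a * p) * (↑U⁻¹ * ↑U⁻¹) := by
      rw [← mul_add, ← hU, mul_assoc, ← mul_assoc (U : A), Units.mul_inv, one_mul]
    have hs2 : s * s = a * a * (↑U⁻¹ * ↑U⁻¹) := by
      rw [mul_assoc, ← mul_assoc _ a, hUa.units_inv_left.eq, mul_assoc, mul_assoc]
    rw [hs2, hs]
    noncomm_ring
  have hUap : Commute (a * p) ↑U⁻¹ := (hUa.symm.mul_left hUp.symm).units_inv_right
  obtain ⟨e, he, hcomm_e, hse⟩ := exists_isIdempotentElem_of_quasinilpotent_mul_self_sub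
    (hss ▸ hq.mul_of_commute_s4 (hUap.mul_right hUap).neg_right)
  have hes : Commute e s := (hcomm_e s (Commute.refl s)).symm
  have hUe : Commute (U : A) e := hcomm_e _ hUs
  have hae : Commute a e := hcomm_e a ((Commute.refl a).mul_right hUa.units_inv_left.symm)
  refine ⟨e, he, hae, ?_, ?_⟩
  · have hsplit : a * e + (1 - e) = (U * e + (1 - e)) + (s - e) * (e * U) := by
      rw [sub_mul, ← mul_assoc, ← mul_assoc, he.eq, mul_assoc s, ← hUe.eq, ← mul_assoc, hsU]
      abel
    have hXs : Commute (U * e + (1 - e)) s :=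
      (hUs.mul_left hes).add_left ((Commute.one_left s).sub_left hes)
    have hXe : Commute (U * e + (1 - e)) e :=
      (hUe.mul_left (Commute.refl e)).add_left ((Commute.one_left e).sub_left (Commute.refl e))
    have hXU : Commute (U * e + (1 - e)) U :=
      ((Commute.refl _).mul_left hUe.symm).add_left ((Commute.one_left _).sub_left hUe.symm)
    have hseU : Commute (s - e) U := hUs.symm.sub_left hUe.symm
    have hsee : Commute (s - e) e := hes.symm.sub_left (Commute.refl e)
    rw [hsplit]
    exact (hse.mul_of_commute_s4 (hsee.mul_right hseU)).isUnit_add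
      (he.isUnit_mul_add_one_sub hUe hUe.units_inv_left (Commute.refl _).units_inv_right
        (by rw [Units.mul_inv, one_mul]))
      ((hXs.sub_right hXe).mul_right (hXe.mul_right hXU))
  · have hsplit : a * (1 - e) = (s - e) * ((1 - e) * U) := by
      rw [← mul_assoc, sub_mul s e, he.mul_one_sub_self, sub_zero, mul_assoc,
        ← ((Commute.one_right _).sub_right hUe).eq, ← mul_assoc, hsU]
    rw [hsplit]
    exact hse.mul_of_commute_s4 ((((Commute.one_right s).sub_right hes.symm).sub_left
      ((Commute.one_right e).sub_right (Commute.refl e))).mul_right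
      (hUs.symm.sub_left hUe.symm))

end BanachAlgebra

theorem stmt4 {A : Type*} [NormedRing A] [NormedAlgebra ℂ A] [CompleteSpace A] (a : A) :
    HasGDrazin a ↔ ∃ p : A, a * p = p * a ∧ IsUnit (a + p) ∧ Quasinilpotent (a * p) := by
  rw [hasGDrazin_iff_exists_isIdempotentElem]
  constructor
  · rintro ⟨e, -, hae, hu, hq⟩
    have hsplit : a + (1 - e) = (a * e + (1 - e)) + a * (1 - e) := by noncomm_ring
    have hae' : Commute a (1 - e) := (Commute.one_right a).sub_right hae
    refine ⟨1 - e, hae', ?_, hq⟩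
    rw [hsplit]
    have hfe : Commute (1 - e) e := (Commute.one_left e).sub_left (Commute.refl e)
    exact hq.isUnit_add hu (((Commute.refl a).mul_right hae).add_right hae' |>.mul_left
      ((hae'.symm.mul_right hfe).add_right (Commute.refl _))).symm
  · rintro ⟨p, hap, hu, hq⟩
    exact exists_isIdempotentElem_of_isUnit_add hap hu hq
end

section
/- If e is an idempotent in a complex unital Banach algebra A commuting with a, eae is invertible in eAe, and (1−e)a(1−e) is quasinilpotent in A, then a has a g-Drazin inverse, with a = e[eae + (1−e)] + (1−e)a where eae + (1−e) is invertible in A and (1−e)a is quasinilpotent in A. -/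
open Filter Finset

theorem stmt9 {A : Type*} [NormedRing A] [NormedAlgebra ℂ A] [CompleteSpace A] (a e : A)
    (he : e * e = e) (hcomm : a * e = e * a)
    (hinv : ∃ y : A, y = e * y * e ∧ (e * a * e) * y = e ∧ y * (e * a * e) = e)
    (hq : Quasinilpotent ((1 - e) * a * (1 - e))) :
    HasGDrazin a ∧ a = e * (e * a * e + (1 - e)) + (1 - e) * a ∧
      IsUnit (e * a * e + (1 - e)) ∧ Quasinilpotent ((1 - e) * a) := by
  obtain ⟨y, hy, h1, h2⟩ := hinv
  have heae : e * a * e = a * e := by rw [← hcomm, mul_assoc, he]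
  have hey : e * y = y := by
    conv_lhs => rw [hy]
    rw [← mul_assoc, ← mul_assoc, he, ← hy]
  have hye : y * e = y := by
    conv_lhs => rw [hy]
    rw [mul_assoc, he, ← hy]
  have hay : a * y = e := by
    rw [← hey, ← mul_assoc, ← heae]
    exact h1
  have h2' : y * (a * e) = e := by rw [← heae]; exact h2
  have hya : y * a = e := by
    rw [← hye, mul_assoc, ← hcomm]
    exact h2'
  have h1e : (1 - e) * a = a - a * e := by rw [sub_mul, one_mul, ← hcomm]
  have h2e : (a - a * e) * (1 - e) = a - a * e := by
    rw [mul_sub, mul_one, sub_mul, mul_assoc, he, sub_self, sub_zero]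
  have hqq : Quasinilpotent (a - a * e) := by
    rw [h1e, h2e] at hq
    exact hq
  refine ⟨⟨y, ?_, ?_, ?_⟩, ?_, ?_, ?_⟩
  · rw [hay, hya]
  · rw [hya, hey]
  · have : a ^ 2 * y = a * e := by rw [sq, mul_assoc, hay]
    rw [this]
    exact hqq
  · rw [heae, h1e, mul_add, mul_sub, mul_one, he, sub_self, add_zero,
      ← mul_assoc, ← hcomm, mul_assoc, he]
    abel
  · refine ⟨⟨e * a * e + (1 - e), y + (1 - e), ?_, ?_⟩, rfl⟩
    · rw [heae]
      rw [add_mul, mul_add, mul_add, mul_assoc, hey, hay, mul_sub, mul_one, mul_assoc, he,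
        sub_self, add_zero, sub_mul, one_mul, hey, sub_self, zero_add, mul_sub, mul_one,
        sub_mul, one_mul, he]
      abel
    · rw [heae]
      have p1 : y * (1 - e) = 0 := by rw [mul_sub, mul_one, hye, sub_self]
      have p2 : (1 - e) * (a * e) = 0 := by
        rw [sub_mul, one_mul, ← mul_assoc, heae, sub_self]
      have p3 : (1 - e) * (1 - e) = 1 - e := by
        rw [mul_sub, mul_one, sub_mul, one_mul, he, sub_self, sub_zero]
      rw [add_mul, mul_add, mul_add, h2', p1, p2, p3, add_zero, zero_add]
      abel
  · rw [h1e]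
    exact hqq
end
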